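/- For a typical weight λ define D_λ on L(λ) by D_λv₀ = q^{λ₂²−λ₁²}·v₀ and D_λv₁ = q^{(λ₂+1)²−(λ₁−1)²}·v₁ (the action of e^{ħ(H₂²−H₁²)} on weight vectors), and the ribbon operator v_λ = (K_λ⁻¹ + (q−q^{−1})·E_λF_λ) ∘ D_λ. Then v_{(1,0)} = id on L((1,0)) (the vector representation) and v_{(0,−1)} = id on L((0,−1)) (which is isomorphic to the dual of the vector representation). -/

import Mathlib

/-!
On `L(λ)` put `n = λ₁ + λ₂`. Then `K_λ⁻¹` is the scalar `q⁻ⁿ`, and `(q − q⁻¹)E_λF_λ` kills `v₁` and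
multiplies `v₀` by `qⁿ − q⁻ⁿ`, so the ribbon operator is diagonal with eigenvalues
`q^(n + λ₂² − λ₁²)` on `v₀` and `q^(−n + (λ₂+1)² − (λ₁−1)²)` on `v₁`. Both exponents equal
`(λ₁ + λ₂)(λ₂ − λ₁ + 1)`, so `v_λ` is a scalar, and that exponent vanishes at `(1,0)` and `(0,−1)`.
-/

set_option synthInstance.maxHeartbeats 1000000
set_option maxHeartbeats 1000000
noncomputable section
open scoped TensorProduct

abbrev F : Type := RatFunc ℂ
def q : F := RatFunc.X

/-- The quantum integer [n] = (qⁿ − q⁻ⁿ)/(q − q⁻¹). -/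
def qn (n : ℤ) : F := (q ^ n - q ^ (-n)) / (q - q⁻¹)

abbrev V : Type := Fin 2 → F
def v0 : V := Pi.single 0 1
def v1 : V := Pi.single 1 1

def Eop : V →ₗ[F] V := Matrix.toLin' !![0, 1; 0, 0]
def Fop (l : ℤ × ℤ) : V →ₗ[F] V := Matrix.toLin' !![0, 0; qn (l.1 + l.2), 0]
def Qop (l : ℤ × ℤ) (h : ℤ × ℤ) : V →ₗ[F] V :=
  Matrix.toLin' !![q ^ (h.1 * l.1 + h.2 * l.2), 0; 0, q ^ (h.1 * (l.1 - 1) + h.2 * (l.2 + 1))]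
def Pop (l : ℤ × ℤ) : V →ₗ[F] V :=
  Matrix.toLin' !![(-1 : F) ^ l.2, 0; 0, (-1 : F) ^ (l.2 + 1)]
def Kop (l : ℤ × ℤ) : V →ₗ[F] V := Qop l (1, 1)
def Kinv (l : ℤ × ℤ) : V →ₗ[F] V := Qop l (-1, -1)

def ΔE (l m : ℤ × ℤ) : V ⊗[F] V →ₗ[F] V ⊗[F] V :=
  TensorProduct.map Eop (Kinv m) + TensorProduct.map (Pop l) Eop
def ΔF (l m : ℤ × ℤ) : V ⊗[F] V →ₗ[F] V ⊗[F] V :=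
  TensorProduct.map (Fop l) LinearMap.id + TensorProduct.map (Kop l ∘ₗ Pop l) (Fop m)
def ΔQ (l m : ℤ × ℤ) (h : ℤ × ℤ) : V ⊗[F] V →ₗ[F] V ⊗[F] V :=
  TensorProduct.map (Qop l h) (Qop m h)

/-- The action of `e^{ħ(H₂²−H₁²)}` on `L(λ)`. -/
def Dop (l : ℤ × ℤ) : V →ₗ[F] V :=
  Matrix.toLin' !![q ^ (l.2 ^ 2 - l.1 ^ 2), 0; 0, q ^ ((l.2 + 1) ^ 2 - (l.1 - 1) ^ 2)]

/-- The ribbon operator `v_λ = (K_λ⁻¹ + (q−q⁻¹)E_λF_λ) ∘ D_λ` on `L(λ)`. -/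
def vop (l : ℤ × ℤ) : V →ₗ[F] V := (Kinv l + (q - q⁻¹) • (Eop ∘ₗ Fop l)) ∘ₗ Dop l

lemma q_ne_zero : q ≠ 0 := RatFunc.X_ne_zero

lemma q_sub_q_inv_ne_zero : q - q⁻¹ ≠ 0 := by
  intro h
  have hsq : q ^ 2 = 1 := by
    rw [sub_eq_zero] at h
    rw [sq]; nth_rw 2 [h]; exact mul_inv_cancel₀ q_ne_zero
  refine RatFunc.transcendental_X (K := ℂ) ⟨Polynomial.X ^ 2 - 1, ?_, ?_⟩
  · exact Polynomial.X_pow_sub_C_ne_zero two_pos 1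
  · simpa [q, sub_eq_zero] using hsq

lemma q_sub_q_inv_mul_qn (n : ℤ) : (q - q⁻¹) * qn n = q ^ n - q ^ (-n) :=
  mul_div_cancel₀ _ q_sub_q_inv_ne_zero

lemma toLin'_fin_two_v0 (a b c d : F) : Matrix.toLin' !![a, b; c, d] v0 = a • v0 + c • v1 := by
  ext i; fin_cases i <;> simp [v0, v1, Matrix.toLin'_apply]

lemma toLin'_fin_two_v1 (a b c d : F) : Matrix.toLin' !![a, b; c, d] v1 = b • v0 + d • v1 := by
  ext i; fin_cases i <;> simp [v0, v1, Matrix.toLin'_apply]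

section WeightVectors

variable (l : ℤ × ℤ)

lemma Kinv_v0 : Kinv l v0 = q ^ (-(l.1 + l.2)) • v0 := by
  rw [Kinv, Qop, toLin'_fin_two_v0, zero_smul, add_zero]
  ring_nf

lemma Kinv_v1 : Kinv l v1 = q ^ (-(l.1 + l.2)) • v1 := by
  rw [Kinv, Qop, toLin'_fin_two_v1, zero_smul, zero_add]
  ring_nf

lemma Eop_Fop_v0 : Eop (Fop l v0) = qn (l.1 + l.2) • v0 := by
  rw [Fop, Eop, toLin'_fin_two_v0, zero_smul, zero_add, map_smul, toLin'_fin_two_v1]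
  simp

lemma Fop_v1 : Fop l v1 = 0 := by
  rw [Fop, toLin'_fin_two_v1, zero_smul, zero_smul, add_zero]

lemma Dop_v0 : Dop l v0 = q ^ (l.2 ^ 2 - l.1 ^ 2) • v0 := by
  rw [Dop, toLin'_fin_two_v0, zero_smul, add_zero]

lemma Dop_v1 : Dop l v1 = q ^ ((l.2 + 1) ^ 2 - (l.1 - 1) ^ 2) • v1 := by
  rw [Dop, toLin'_fin_two_v1, zero_smul, zero_add]

lemma vop_v0 : vop l v0 = q ^ ((l.1 + l.2) * (l.2 - l.1 + 1)) • v0 := by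
  have hK : q ^ (-(l.1 + l.2)) + (q - q⁻¹) * qn (l.1 + l.2) = q ^ (l.1 + l.2) := by
    rw [q_sub_q_inv_mul_qn]; ring
  simp only [vop, LinearMap.comp_apply, Dop_v0, map_smul, LinearMap.add_apply,
    LinearMap.smul_apply, Kinv_v0, Eop_Fop_v0, smul_smul, ← add_smul, hK, ← zpow_add₀ q_ne_zero]
  ring_nf

lemma vop_v1 : vop l v1 = q ^ ((l.1 + l.2) * (l.2 - l.1 + 1)) • v1 := by
  simp only [vop, LinearMap.comp_apply, Dop_v1, map_smul, LinearMap.add_apply,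
    LinearMap.smul_apply, Kinv_v1, Fop_v1, map_zero, smul_zero, add_zero, smul_smul,
    ← zpow_add₀ q_ne_zero]
  ring_nf

end WeightVectors

lemma vop_eq_smul_id (l : ℤ × ℤ) : vop l = q ^ ((l.1 + l.2) * (l.2 - l.1 + 1)) • LinearMap.id := by
  refine (Pi.basisFun F (Fin 2)).ext fun i => ?_
  rw [Pi.basisFun_apply, LinearMap.smul_apply, LinearMap.id_apply]
  fin_cases i
  exacts [vop_v0 l, vop_v1 l]

/-- the ribbon element acts as the identity on the vector
representation `L((1,0))` and on its dual `L((0,−1))`. -/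
theorem ribbon_acts_trivially :
    vop (1, 0) = LinearMap.id ∧ vop (0, -1) = LinearMap.id := by
  simp [vop_eq_smul_id]
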